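/- (Theorem 5(i), first half.) If β·W > 1, then the threshold function p ↦ G(W, p; β) is strictly increasing on [0, 1): for all 0 ≤ p₁ < p₂ < 1, G(W, p₁; β) < G(W, p₂; β). -/

import Mathlib

/-!
In the variable `x = 1 / (1 - R) = 1 / ((1 - p) W)`, which increases with `p`, the threshold is
`G = √((x - 1/2)² + c x) - (x - 1/2)` with `c = 2βW`. Squaring shows `√((x - 1/2)² + c x) < x - 1/2 + c/2`
exactly when `c > 2`; since the radicand grows by `(x₂ - x₁)(x₁ + x₂ - 1 + c)` from `x₁` to `x₂`,
this bound makes the square root grow faster than `x - 1/2`.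
-/

/-- The optimal-threshold function `G(W, p; β)` of Corollary 1, with
`R = 1 − (1−p)·W`. -/
noncomputable def G (W p β : ℝ) : ℝ :=
  let R := 1 - (1 - p) * W;
  -(1 + R) / (2 * (1 - R)) +
    Real.sqrt (R ^ 2 / (1 - R) ^ 2 + (R + 2 * β * W) / (1 - R) + 1 / 4)

open Real

noncomputable def sqrtGap (c x : ℝ) : ℝ := √((x - 1 / 2) ^ 2 + c * x) - (x - 1 / 2)

theorem G_eq_sqrtGap {W p : ℝ} (β : ℝ) (hq : (1 - p) * W ≠ 0) :
    G W p β = sqrtGap (2 * β * W) ((1 - p) * W)⁻¹ := by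
  simp only [G, sqrtGap]
  generalize (1 - p) * W = q at hq ⊢
  have hlin : -(1 + (1 - q)) / (2 * (1 - (1 - q))) = -(q⁻¹ - 1 / 2) := by
    rw [sub_sub_cancel]
    field_simp
    ring
  have hrad : (1 - q) ^ 2 / (1 - (1 - q)) ^ 2 + (1 - q + 2 * β * W) / (1 - (1 - q)) + 1 / 4 =
      (q⁻¹ - 1 / 2) ^ 2 + 2 * β * W * q⁻¹ := by
    rw [sub_sub_cancel]
    field_simp
    ring
  rw [hlin, hrad]
  ring

theorem sqrt_lt_of_two_lt {c x : ℝ} (hc : 2 < c) (hx : 0 ≤ x) :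
    √((x - 1 / 2) ^ 2 + c * x) < x - 1 / 2 + c / 2 := by
  rw [sqrt_lt' (by linarith)]
  nlinarith

theorem sqrtGap_strictMonoOn {c : ℝ} (hc : 2 < c) : StrictMonoOn (sqrtGap c) (Set.Ici 0) := by
  intro x₁ (hx₁ : 0 ≤ x₁) x₂ _ h12
  set s₁ := √((x₁ - 1 / 2) ^ 2 + c * x₁)
  have hs₁ : s₁ ^ 2 = (x₁ - 1 / 2) ^ 2 + c * x₁ := sq_sqrt (by positivity)
  have hbound := mul_lt_mul_of_pos_right (sqrt_lt_of_two_lt hc hx₁) (sub_pos.2 h12)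
  have hgrowth : s₁ + (x₂ - x₁) < √((x₂ - 1 / 2) ^ 2 + c * x₂) := by
    rw [lt_sqrt (by positivity)]
    nlinarith
  simp only [sqrtGap]
  linarith

theorem G_strictMono_in_p (β W : ℝ) (hW0 : 0 < W)
    (h : 1 < β * W) :
    ∀ p₁ p₂ : ℝ, 0 ≤ p₁ → p₁ < p₂ → p₂ < 1 → G W p₁ β < G W p₂ β := by
  intro p₁ p₂ _ h12 hp₂
  have hq₂ : 0 < (1 - p₂) * W := mul_pos (by linarith) hW0
  have hq : (1 - p₂) * W < (1 - p₁) * W := by nlinarith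
  have hq₁ : 0 < (1 - p₁) * W := hq₂.trans hq
  rw [G_eq_sqrtGap β hq₁.ne', G_eq_sqrtGap β hq₂.ne']
  exact sqrtGap_strictMonoOn (by linarith) (inv_pos.2 hq₁).le (inv_pos.2 hq₂).le
    (inv_strictAnti₀ hq₂ hq)
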